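/- arXiv:2502.05243 — 2 statements merged into one kernel-verified Lean document; each statement's English description precedes it below -/
import Mathlib

section
/- Let n ≥ 3, m ≥ 1, M = circ(−2,1,0,…,0,1), and let X(t) ∈ ℂ^n solve dX/dt = (−1)^{m+1} M^m X with X(0) = X^0 = ∑_{k=0}^{n−1} a_k P_k. Then X(t) converges as t → ∞ to the constant polygon a_0·(1,…,1)^T, where a_0 = (1/n)∑_{j=0}^{n−1} X^0_j is the centre of mass of X^0, and the convergence is exponential with rate λ_{m,1} = −4^m sin^{2m}(π/n): |X(t) − a_0·(1,…,1)^T| ≤ e^{λ_{m,1} t} |X^0 − a_0·(1,…,1)^T|. -/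
/-!
Each Fourier vector `P_k` is an eigenvector of `M = circ(−2,1,0,…,0,1)` with eigenvalue
`ζ + ζ⁻¹ − 2 = −4 sin²(πk/n)`, `ζ = e^{2πik/n}`, hence of the flow's generator `(−1)^{m+1} M^m`
with eigenvalue `λ_{m,k}`. By uniqueness of solutions of linear ODEs,
`X(t) = ∑ e^{λ_{m,k} t} a_k P_k`. Since `λ_{m,0} = 0`, the `k = 0` term is the constant polygon
`a_0 P_0`, and since `λ_{m,k} ≤ λ_{m,1} < 0` for `k ≠ 0`, the orthogonality of the `P_k` gives
`|X(t) − a_0 P_0| ≤ e^{λ_{m,1} t} |X^0 − a_0 P_0|`. The centre of mass is `a_0` because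
`∑_j (P_k)_j` vanishes for `k ≠ 0`.
-/

open Complex Real Filter

/-- The n×n circulant matrix circ(−2,1,0,…,0,1) over ℂ. -/
def cycMC (n : ℕ) [NeZero n] : Matrix (Fin n) (Fin n) ℂ :=
  Matrix.of fun i j =>
    (if i = j then (-2 : ℂ) else 0) + (if i = j + 1 then 1 else 0) + (if j = i + 1 then 1 else 0)

/-- The discrete Fourier vector P_k, as an element of Euclidean space ℂ^n. -/
noncomputable def fourierP (n : ℕ) (k : Fin n) : EuclideanSpace ℂ (Fin n) :=
  WithLp.toLp 2 (fun j => Complex.exp (2 * Real.pi * Complex.I / n) ^ ((j : ℕ) * (k : ℕ)))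

/-- The eigenvalue λ_{m,k} = −4^m sin^{2m}(πk/n). -/
noncomputable def lam (n m k : ℕ) : ℝ := -(4 : ℝ) ^ m * Real.sin (Real.pi * k / n) ^ (2 * m)

open scoped Matrix

theorem hasDerivAt_piLp {ι : Type*} [Fintype ι] {p : ENNReal} [Fact (1 ≤ p)] {E : ι → Type*}
    [∀ i, NormedAddCommGroup (E i)] [∀ i, NormedSpace ℝ (E i)] {f : ℝ → PiLp p E}
    {f' : PiLp p E} {t : ℝ} : HasDerivAt f f' t ↔ ∀ i, HasDerivAt (fun s => f s i) (f' i) t := by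
  simp only [hasDerivAt_iff_hasFDerivAt, ← hasFDerivWithinAt_univ, hasFDerivWithinAt_piLp]
  rfl

theorem eq_sum_exp_smul_of_hasDerivAt {E ι : Type*} [NormedAddCommGroup E] [NormedSpace ℝ E]
    [Fintype ι] (A : E →L[ℝ] E) {w : ι → E} {μ : ι → ℝ} (hw : ∀ i, A (w i) = μ i • w i)
    {X : ℝ → E} (hX : ∀ t, HasDerivAt X (A (X t)) t) (h0 : X 0 = ∑ i, w i) :
    X = fun t => ∑ i, Real.exp (μ i * t) • w i := by
  refine ODE_solution_unique_univ (v := fun _ => A) (s := fun _ => Set.univ) (t₀ := 0)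
    (fun _ => A.lipschitz.lipschitzOnWith) (fun t => ⟨hX t, trivial⟩) (fun t => ⟨?_, trivial⟩)
    (by simp [h0])
  simp only [map_sum, map_smul, hw, smul_smul]
  refine HasDerivAt.fun_sum fun i _ => ?_
  simpa [mul_comm] using ((hasDerivAt_id t).const_mul (μ i)).exp.smul_const (w i)

section Orthogonal

variable {𝕜 E ι : Type*} [RCLike 𝕜] [NormedAddCommGroup E] [InnerProductSpace 𝕜 E] {v : ι → E}

theorem norm_sum_sq_eq_of_pairwise_inner_eq_zero
    (hv : Pairwise fun i j => inner 𝕜 (v i) (v j) = 0) (s : Finset ι) :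
    ‖∑ i ∈ s, v i‖ ^ 2 = ∑ i ∈ s, ‖v i‖ ^ 2 := by
  classical
  induction s using Finset.induction_on with
  | empty => simp
  | insert a s ha ih =>
    have horth : inner 𝕜 (v a) (∑ i ∈ s, v i) = 0 :=
      (inner_sum _ _ _).trans
        (Finset.sum_eq_zero fun i hi => hv (ne_of_mem_of_not_mem hi ha).symm)
    rw [Finset.sum_insert ha, Finset.sum_insert ha, norm_add_sq (𝕜 := 𝕜), horth, map_zero,
      mul_zero, add_zero, ih]

theorem norm_sum_smul_le_of_pairwise_inner_eq_zero
    (hv : Pairwise fun i j => inner 𝕜 (v i) (v j) = 0) (s : Finset ι) (r : ι → 𝕜) {R : ℝ}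
    (hR : 0 ≤ R) (hr : ∀ i ∈ s, ‖r i‖ ≤ R) :
    ‖∑ i ∈ s, r i • v i‖ ≤ R * ‖∑ i ∈ s, v i‖ := by
  have hrv : Pairwise fun i j => inner 𝕜 (r i • v i) (r j • v j) = 0 := fun i j hij => by
    simp only [inner_smul_left, inner_smul_right, hv hij, mul_zero]
  rw [← pow_le_pow_iff_left₀ (norm_nonneg _) (by positivity) two_ne_zero, mul_pow,
    norm_sum_sq_eq_of_pairwise_inner_eq_zero hrv, norm_sum_sq_eq_of_pairwise_inner_eq_zero hv,
    Finset.mul_sum]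
  gcongr with i hi
  rw [norm_smul, mul_pow]
  gcongr
  exact hr i hi

end Orthogonal

theorem tendsto_of_norm_sub_le_exp_mul {E : Type*} [SeminormedAddCommGroup E] {X : ℝ → E}
    {c : E} {μ C : ℝ} (hμ : μ < 0) (h : ∀ t, 0 ≤ t → ‖X t - c‖ ≤ Real.exp (μ * t) * C) :
    Tendsto X atTop (nhds c) := by
  have hbound : Tendsto (fun t => Real.exp (μ * t) * C) atTop (nhds 0) := by
    simpa using (Real.tendsto_exp_atBot.comp
      ((tendsto_const_mul_atBot_of_neg hμ).2 tendsto_id)).mul_const C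
  exact tendsto_iff_norm_sub_tendsto_zero.2 (squeeze_zero'
    (Eventually.of_forall fun _ => norm_nonneg _) ((eventually_ge_atTop 0).mono h) hbound)

theorem Fin.sum_pow_val_eq_ite {K : Type*} [DivisionRing K] [DecidableEq K] {n : ℕ} {ζ : K}
    (hζ : ζ ^ n = 1) : ∑ j : Fin n, ζ ^ (j : ℕ) = if ζ = 1 then (n : K) else 0 := by
  rw [Fin.sum_univ_eq_sum_range (ζ ^ ·)]
  split_ifs with h
  · simp [h]
  · rw [geom_sum_eq h, hζ, sub_self, zero_div]

theorem Matrix.pow_mulVec_of_mulVec_eq_smul {ι R : Type*} [Fintype ι] [DecidableEq ι]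
    [CommRing R] {M : Matrix ι ι R} {v : ι → R} {μ : R} (h : M *ᵥ v = μ • v) (m : ℕ) :
    (M ^ m) *ᵥ v = μ ^ m • v := by
  induction m with
  | zero => simp
  | succ m ih =>
    rw [pow_succ', ← Matrix.mulVec_mulVec, ih, Matrix.mulVec_smul, h, smul_smul, pow_succ]

theorem lam_zero (n : ℕ) {m : ℕ} (hm : m ≠ 0) : lam n m 0 = 0 := by
  simp [lam, hm]

theorem lam_one_neg {n : ℕ} (hn : 2 ≤ n) (m : ℕ) : lam n m 1 < 0 := by
  have hsin : 0 < Real.sin (π / n) :=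
    Real.sin_pos_of_pos_of_lt_pi (by positivity) (div_lt_self Real.pi_pos (by exact_mod_cast hn))
  rw [lam, Nat.cast_one, mul_one, neg_mul, neg_lt_zero]
  positivity

theorem sin_pi_div_le_sin {n k : ℕ} (hk : k ≠ 0) (hkn : k < n) :
    Real.sin (π / n) ≤ Real.sin (π * k / n) := by
  have hn : (0 : ℝ) < n := by exact_mod_cast Nat.zero_lt_of_lt hkn
  have hk1 : (1 : ℝ) ≤ k := by exact_mod_cast Nat.one_le_iff_ne_zero.2 hk
  have hkn' : (k : ℝ) + 1 ≤ n := by exact_mod_cast hkn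
  set a := π / n
  have ha : 0 < a := by positivity
  have hπ : π = a * n := (div_mul_cancel₀ π hn.ne').symm
  have hx : π * k / n = a * k := by rw [hπ]; field_simp
  have hmem : a * k ∈ segment ℝ a (π - a) := by
    rw [segment_eq_Icc (by rw [hπ]; nlinarith)]
    constructor <;> nlinarith
  -- `sin` is concave on `[0, π]` and takes the same value `sin a` at both ends of `[a, π - a]`.
  have := strictConcaveOn_sin_Icc.concaveOn.ge_on_segment
    ⟨ha.le, by rw [hπ]; nlinarith⟩ ⟨by rw [hπ]; nlinarith, by linarith⟩ hmem
  rwa [Real.sin_pi_sub, min_self, ← hx] at this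

theorem lam_le_lam_one {n k : ℕ} (m : ℕ) (hk : k ≠ 0) (hkn : k < n) :
    lam n m k ≤ lam n m 1 := by
  have hsin : 0 ≤ Real.sin (π / n) := Real.sin_nonneg_of_nonneg_of_le_pi (by positivity)
    (div_le_self Real.pi_pos.le (by exact_mod_cast Nat.zero_lt_of_lt hkn))
  rw [lam, lam, Nat.cast_one, mul_one, neg_mul, neg_mul, neg_le_neg_iff]
  gcongr
  exact sin_pi_div_le_sin hk hkn

theorem neg_one_pow_mul_lam_one_pow (n m k : ℕ) :
    (-1) ^ (m + 1) * lam n 1 k ^ m = lam n m k := by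
  rw [lam, lam, pow_one, mul_one, neg_mul, neg_pow (4 * _), mul_pow, ← pow_mul, ← mul_assoc,
    ← pow_add, show m + 1 + m = 2 * m + 1 by ring, pow_succ, pow_mul, neg_one_sq, one_pow]
  ring

theorem lam_one_eq (n k : ℕ) :
    ((lam n 1 k : ℝ) : ℂ) =
      (Complex.exp (2 * π * I / n) ^ k)⁻¹ - 2 + Complex.exp (2 * π * I / n) ^ k := by
  set u := Complex.exp (π * k / n * I)
  have hζ : Complex.exp (2 * π * I / n) ^ k = u ^ 2 := by
    rw [← Complex.exp_nat_mul, ← Complex.exp_nat_mul]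
    congr 1
    ring
  have hsin : Complex.sin (π * k / n) = (u⁻¹ - u) * I / 2 := by
    rw [Complex.sin, neg_mul, Complex.exp_neg]
  have hu : u ≠ 0 := Complex.exp_ne_zero _
  rw [lam, hζ]
  push_cast
  rw [hsin]
  field_simp
  linear_combination -4 * (1 - u ^ 2) ^ 2 * I_sq

section Fourier

theorem isPrimitiveRoot_fourier (n : ℕ) [NeZero n] :
    IsPrimitiveRoot (Complex.exp (2 * π * I / n)) n :=
  Complex.isPrimitiveRoot_exp n (NeZero.ne n)

theorem fourierP_apply {n : ℕ} (k j : Fin n) :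
    fourierP n k j = (Complex.exp (2 * π * I / n) ^ (k : ℕ)) ^ (j : ℕ) := by
  rw [← pow_mul, mul_comm (k : ℕ)]
  rfl

variable {n : ℕ} [NeZero n]

theorem fourierP_add_one (k i : Fin n) :
    fourierP n k (i + 1) = Complex.exp (2 * π * I / n) ^ (k : ℕ) * fourierP n k i := by
  have hζ : (Complex.exp (2 * π * I / n) ^ (k : ℕ)) ^ n = 1 := by
    rw [pow_right_comm, (isPrimitiveRoot_fourier n).pow_eq_one, one_pow]
  rw [fourierP_apply, fourierP_apply, Fin.val_add, Fin.val_one', Nat.add_mod_mod,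
    ← pow_eq_pow_mod _ hζ, pow_succ, mul_comm]

theorem fourierP_sub_one (k i : Fin n) :
    fourierP n k (i - 1) = (Complex.exp (2 * π * I / n) ^ (k : ℕ))⁻¹ * fourierP n k i := by
  rw [← sub_add_cancel i 1, fourierP_add_one, sub_add_cancel, inv_mul_cancel_left₀]
  exact pow_ne_zero _ (Complex.exp_ne_zero _)

theorem sum_fourierP_apply (k : Fin n) :
    ∑ j, fourierP n k j = if k = 0 then (n : ℂ) else 0 := by
  have hω := isPrimitiveRoot_fourier n
  have hζ : (Complex.exp (2 * π * I / n) ^ (k : ℕ)) ^ n = 1 := by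
    rw [pow_right_comm, hω.pow_eq_one, one_pow]
  simp only [fourierP_apply, Fin.sum_pow_val_eq_ite hζ, hω.pow_eq_one_iff_dvd,
    Nat.dvd_iff_mod_eq_zero, Nat.mod_eq_of_lt k.isLt, Fin.ext_iff, Fin.val_zero]

theorem inner_fourierP (k l : Fin n) :
    inner ℂ (fourierP n k) (fourierP n l) = if k = l then (n : ℂ) else 0 := by
  have hω := isPrimitiveRoot_fourier n
  set ω := Complex.exp (2 * π * I / n)
  have hconj : (starRingEnd ℂ) ω = ω⁻¹ :=
    (Complex.inv_eq_conj (hω.norm'_eq_one (NeZero.ne n))).symm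
  have hζ : ((ω ^ (k : ℕ))⁻¹ * ω ^ (l : ℕ)) ^ n = 1 := by
    rw [mul_pow, inv_pow, pow_right_comm, pow_right_comm ω (l : ℕ), hω.pow_eq_one, one_pow,
      one_pow, inv_one, one_mul]
  have hterm : ∀ j : Fin n, inner ℂ (fourierP n k j) (fourierP n l j)
      = ((ω ^ (k : ℕ))⁻¹ * ω ^ (l : ℕ)) ^ (j : ℕ) := by
    intro j
    rw [RCLike.inner_apply, fourierP_apply, fourierP_apply, map_pow, map_pow, hconj, mul_pow,
      inv_pow, mul_comm]
  have hone : (ω ^ (k : ℕ))⁻¹ * ω ^ (l : ℕ) = 1 ↔ k = l := by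
    rw [inv_mul_eq_one₀ (pow_ne_zero _ (Complex.exp_ne_zero _)), Fin.ext_iff]
    exact ⟨fun h => hω.pow_inj k.isLt l.isLt h, fun h => h ▸ rfl⟩
  simp only [PiLp.inner_apply, hterm, Fin.sum_pow_val_eq_ite hζ, hone]

theorem sum_apply_sum_smul_fourierP (a : Fin n → ℂ) :
    ∑ j, (∑ k, a k • fourierP n k) j = n * a 0 := by
  simp only [WithLp.ofLp_sum, Finset.sum_apply, PiLp.smul_apply, smul_eq_mul]
  rw [Finset.sum_comm]
  simp only [← Finset.mul_sum, sum_fourierP_apply, mul_ite, mul_zero, Finset.sum_ite_eq',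
    Finset.mem_univ, if_true, mul_comm]

theorem pairwise_inner_smul_fourierP (a : Fin n → ℂ) :
    Pairwise fun k l => inner ℂ (a k • fourierP n k) (a l • fourierP n l) = 0 :=
  fun k l hkl => by simp [inner_fourierP, hkl]

theorem cycMC_mulVec_apply (x : Fin n → ℂ) (i : Fin n) :
    (cycMC n *ᵥ x) i = x (i - 1) - 2 * x i + x (i + 1) := by
  have hprev : ∀ j : Fin n, i = j + 1 ↔ j = i - 1 :=
    fun j => eq_comm.trans eq_sub_iff_add_eq.symm
  simp only [Matrix.mulVec, dotProduct, cycMC, Matrix.of_apply, add_mul, ite_mul, one_mul,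
    zero_mul, Finset.sum_add_distrib, hprev, Finset.sum_ite_eq, Finset.sum_ite_eq',
    Finset.mem_univ, if_true]
  ring

theorem cycMC_mulVec_fourierP (k : Fin n) :
    cycMC n *ᵥ fourierP n k = ((lam n 1 k : ℝ) : ℂ) • (fourierP n k : Fin n → ℂ) := by
  ext i
  rw [cycMC_mulVec_apply, fourierP_sub_one, fourierP_add_one, lam_one_eq, Pi.smul_apply,
    smul_eq_mul]
  ring

-- Restricted to real scalars so that it can be the vector field of an ODE in real time.
noncomputable def polyharmonicCLM (n m : ℕ) [NeZero n] :
    EuclideanSpace ℂ (Fin n) →L[ℝ] EuclideanSpace ℂ (Fin n) :=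
  (((-1 : ℂ) ^ (m + 1)) • Matrix.toEuclideanCLM (𝕜 := ℂ) (cycMC n ^ m)).restrictScalars ℝ

theorem polyharmonicCLM_smul_fourierP (m : ℕ) (c : ℂ) (k : Fin n) :
    polyharmonicCLM n m (c • fourierP n k) = lam n m k • c • fourierP n k := by
  have hpow := Matrix.pow_mulVec_of_mulVec_eq_smul (cycMC_mulVec_fourierP k) m
  have hlam := congrArg ((↑) : ℝ → ℂ) (neg_one_pow_mul_lam_one_pow n m k)
  push_cast at hlam
  ext j
  change (-1 : ℂ) ^ (m + 1) * ((cycMC n ^ m) *ᵥ (c • fourierP n k)) j = _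
  rw [WithLp.ofLp_smul, Matrix.mulVec_smul, hpow]
  simp only [Pi.smul_apply, WithLp.ofLp_smul, smul_eq_mul, Complex.real_smul, ← hlam]
  ring

end Fourier

theorem planar_flow_convergence (n m : ℕ) [NeZero n] (hn : 3 ≤ n) (hm : 1 ≤ m)
    (a : Fin n → ℂ) (X : ℝ → EuclideanSpace ℂ (Fin n))
    (hflow : ∀ (t : ℝ) (j : Fin n),
      HasDerivAt (fun s => X s j)
        ((((-1 : ℂ) ^ (m + 1)) • (cycMC n ^ m).mulVec (X t)) j) t)
    (hinit : X 0 = ∑ k : Fin n, a k • fourierP n k) :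
    (a 0 = (1 / n) * ∑ j : Fin n, X 0 j) ∧
    Tendsto X atTop (nhds (a 0 • fourierP n 0)) ∧
    (∀ t : ℝ, 0 ≤ t →
      ‖X t - a 0 • fourierP n 0‖ ≤ Real.exp (lam n m 1 * t) * ‖X 0 - a 0 • fourierP n 0‖) := by
  have hsol : X = fun t => ∑ k : Fin n, Real.exp (lam n m k * t) • a k • fourierP n k :=
    eq_sum_exp_smul_of_hasDerivAt (polyharmonicCLM n m)
      (fun k => polyharmonicCLM_smul_fourierP m (a k) k) (fun t => hasDerivAt_piLp.2 (hflow t))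
      hinit
  have hdev : ∀ t, X t - a 0 • fourierP n 0 =
      ∑ k ∈ Finset.univ.erase (0 : Fin n),
        (Real.exp (lam n m k * t) : ℂ) • a k • fourierP n k := by
    intro t
    rw [congrFun hsol t, ← Finset.add_sum_erase _ _ (Finset.mem_univ 0), Fin.val_zero,
      lam_zero n (Nat.one_le_iff_ne_zero.1 hm), zero_mul, Real.exp_zero, one_smul,
      add_sub_cancel_left]
    simp only [Complex.coe_smul]
  have hdecay : ∀ t : ℝ, 0 ≤ t →
      ‖X t - a 0 • fourierP n 0‖ ≤ Real.exp (lam n m 1 * t) * ‖X 0 - a 0 • fourierP n 0‖ := by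
    intro t ht
    rw [hdev t, hdev 0]
    simp only [mul_zero, Real.exp_zero, Complex.ofReal_one, one_smul]
    refine norm_sum_smul_le_of_pairwise_inner_eq_zero (pairwise_inner_smul_fourierP a) _ _
      (Real.exp_pos _).le fun k hk => ?_
    rw [Complex.norm_real, Real.norm_of_nonneg (Real.exp_pos _).le, Real.exp_le_exp]
    exact mul_le_mul_of_nonneg_right
      (lam_le_lam_one m (Fin.val_ne_zero_iff.2 (Finset.ne_of_mem_erase hk)) k.isLt) ht
  refine ⟨?_, tendsto_of_norm_sub_le_exp_mul (lam_one_neg (by omega) m) hdecay, hdecay⟩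
  rw [hinit, sum_apply_sum_smul_fourierP, one_div,
    inv_mul_cancel_left₀ (Nat.cast_ne_zero.2 (NeZero.ne n))]
end

section
/- Let n ≥ 3, m ≥ 1, M = circ(−2,1,0,…,0,1), Y ∈ ℂ^n fixed, and let X(t) solve dX/dt = (−1)^{m+1}M^m(X − Y) with X(0) = X^0. Then as t → ∞, X(t) converges exponentially to Y + c·(1,…,1)^T, where c = (1/n)∑_{j=0}^{n−1}(X^0_j − Y_j) is the centre of mass of the difference polygon X^0 − Y. -/
open Complex Real Filter

/-!
For an `n`-th root of unity `η`, the row vector `(1, η, …, η^(n-1))` is a left eigenvector of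
`cycMC n` with eigenvalue `η + η⁻¹ - 2 = -‖η - 1‖²`, hence of `(-1)^(m+1) • cycMC n ^ m` with
eigenvalue `-‖η - 1‖^(2m)`. So the discrete Fourier coefficients of `X - Y` solve scalar linear
ODEs: the one at `η = 1`, which is `∑ j, (X - Y) j`, is conserved, and the others decay like
`exp (-‖ζ^k - 1‖^(2m) t)` with `ζ^k ≠ 1`. Fourier inversion turns this into exponential
convergence of `X t` to `Y` plus the centre of mass of `X0 - Y`.
-/

open Finset Matrix ComplexConjugate Topology

def charVec (n : ℕ) (η : ℂ) : Fin n → ℂ := fun i => η ^ (i : ℕ)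

section CharVec

variable {n : ℕ} {η : ℂ}

lemma charVec_add (hη : η ^ n = 1) (a b : Fin n) :
    charVec n η (a + b) = charVec n η a * charVec n η b := by
  rw [charVec, charVec, charVec, Fin.val_add, ← pow_eq_pow_mod _ hη, pow_add]

lemma charVec_one [NeZero n] (hη : η ^ n = 1) : charVec n η 1 = η := by
  rw [charVec, Fin.val_one', ← pow_eq_pow_mod _ hη, pow_one]

lemma charVec_sub_one [NeZero n] (hη : η ^ n = 1) (a : Fin n) :
    charVec n η (a - 1) = η⁻¹ * charVec n η a := by
  have hη0 : η ≠ 0 := by rintro rfl; simp [NeZero.ne n] at hη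
  rw [← sub_add_cancel a 1, charVec_add hη, charVec_one hη, add_sub_cancel_right]
  field_simp

lemma charVec_vecMul_cycMC [NeZero n] (hη : η ^ n = 1) :
    charVec n η ᵥ* cycMC n = (η + η⁻¹ - 2) • charVec n η := by
  ext j
  have hshift : ∀ i : Fin n, (j = i + 1) ↔ (i = j - 1) := fun i => by
    rw [eq_sub_iff_add_eq, eq_comm]
  simp only [vecMul, dotProduct, cycMC, of_apply, mul_add, sum_add_distrib, mul_ite, mul_zero,
    mul_one, hshift, sum_ite_eq', mem_univ, if_true, Pi.smul_apply, smul_eq_mul,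
    charVec_add hη, charVec_sub_one hη, charVec_one hη]
  ring

lemma charVec_vecMul_cycMC_pow [NeZero n] (hη : η ^ n = 1) (m : ℕ) :
    charVec n η ᵥ* (cycMC n ^ m) = (η + η⁻¹ - 2) ^ m • charVec n η := by
  induction m with
  | zero => simp
  | succ m ih =>
    rw [pow_succ, ← vecMul_vecMul, ih, smul_vecMul, charVec_vecMul_cycMC hη, smul_smul, pow_succ]

end CharVec

lemma add_inv_sub_two_of_norm_eq_one {η : ℂ} (hη : ‖η‖ = 1) :
    η + η⁻¹ - 2 = -((‖η - 1‖ ^ 2 : ℝ) : ℂ) := by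
  have hconj : η * conj η = 1 := by rw [Complex.mul_conj', hη]; simp
  rw [Complex.ofReal_pow, ← Complex.mul_conj', map_sub, map_one, inv_eq_of_mul_eq_one_right hconj]
  linear_combination hconj

lemma neg_one_pow_succ_mul_neg_pow {R : Type*} [Ring R] (m : ℕ) (a : R) :
    (-1) ^ (m + 1) * (-a) ^ m = -a ^ m := by
  rw [neg_pow a, ← mul_assoc, ← pow_add, show m + 1 + m = 2 * m + 1 by ring, pow_succ, pow_mul]
  simp

lemma charVec_vecMul_neg_one_pow_smul_cycMC_pow {n : ℕ} [NeZero n] {η : ℂ} (hη : η ^ n = 1) (m : ℕ) :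
    charVec n η ᵥ* ((-1 : ℂ) ^ (m + 1) • cycMC n ^ m)
      = (-(((‖η - 1‖ ^ 2) ^ m : ℝ) : ℂ)) • charVec n η := by
  rw [vecMul_smul, charVec_vecMul_cycMC_pow hη,
    add_inv_sub_two_of_norm_eq_one (norm_eq_one_of_pow_eq_one hη (NeZero.ne n)), smul_smul,
    neg_one_pow_succ_mul_neg_pow]
  norm_cast

theorem eq_exp_mul_of_hasDerivAt {μ : ℂ} {g : ℝ → ℂ} (hg : ∀ t, HasDerivAt g (μ * g t) t)
    (t : ℝ) : g t = exp (μ * t) * g 0 := by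
  have hconst : ∀ s, HasDerivAt (fun u : ℝ => exp (-(μ * u)) * g u) 0 s := by
    intro s
    have hE : HasDerivAt (fun u : ℝ => exp (-(μ * u))) (exp (-(μ * s)) * -μ) s :=
      (((hasDerivAt_id (s : ℂ)).const_mul μ).neg.cexp).comp_ofReal.congr_deriv (by simp)
    exact (hE.mul (hg s)).congr_deriv (by ring)
  have h := is_const_of_deriv_eq_zero (fun s => (hconst s).differentiableAt)
    (fun s => (hconst s).deriv) t 0
  simp only [ofReal_zero, mul_zero, neg_zero, Complex.exp_zero, one_mul] at h
  rw [← h, ← mul_assoc, ← Complex.exp_add, add_neg_cancel, Complex.exp_zero, one_mul]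

theorem dotProduct_eq_exp_mul_of_vecMul_eq_smul {ι : Type*} [Fintype ι] {A : Matrix ι ι ℂ}
    {v : ι → ℂ} {μ : ℂ} (hv : v ᵥ* A = μ • v) {Z : ℝ → ι → ℂ}
    (hZ : ∀ t j, HasDerivAt (fun s => Z s j) ((A *ᵥ Z t) j) t) (t : ℝ) :
    v ⬝ᵥ Z t = exp (μ * t) * (v ⬝ᵥ Z 0) := by
  refine eq_exp_mul_of_hasDerivAt (g := fun s => v ⬝ᵥ Z s) (fun s => ?_) t
  have h := HasDerivAt.fun_sum fun j (_ : j ∈ univ) => (hZ s j).const_mul (v j)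
  rwa [← dotProduct, dotProduct_mulVec, hv, smul_dotProduct] at h

section Fourier

variable {n : ℕ} {ζ : ℂ}

theorem sum_charVec_mul_charVec_inv (hζ : IsPrimitiveRoot ζ n) (i j : Fin n) :
    ∑ k : Fin n, charVec n (ζ ^ (k : ℕ)) i * charVec n (ζ⁻¹ ^ (k : ℕ)) j
      = if i = j then (n : ℂ) else 0 := by
  have hζ0 : ζ ≠ 0 := hζ.ne_zero (Fin.pos i).ne'
  set w := ζ ^ (i : ℕ) * ζ⁻¹ ^ (j : ℕ)
  have hterm : ∀ k : Fin n,
      charVec n (ζ ^ (k : ℕ)) i * charVec n (ζ⁻¹ ^ (k : ℕ)) j = w ^ (k : ℕ) :=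
    fun k => by simp only [charVec, w, mul_pow, ← pow_mul, mul_comm]
  simp only [hterm, Fin.sum_univ_eq_sum_range (w ^ ·)]
  split_ifs with hij
  · simp [w, hij, hζ0]
  · have hw1 : w ≠ 1 := fun hw => hij <| Fin.ext <| hζ.pow_inj i.isLt j.isLt <| by
      simp only [w, inv_pow, ← div_eq_mul_inv] at hw
      exact (div_eq_one_iff_eq (pow_ne_zero _ hζ0)).1 hw
    have hwn : w ^ n = 1 := by
      rw [mul_pow, ← pow_mul, mul_comm (i : ℕ) n, pow_mul, hζ.pow_eq_one, one_pow, one_mul,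
        ← pow_mul, mul_comm (j : ℕ) n, pow_mul, inv_pow, hζ.pow_eq_one, inv_one, one_pow]
    rw [geom_sum_eq hw1, hwn, sub_self, zero_div]

theorem sum_dotProduct_charVec_smul (hζ : IsPrimitiveRoot ζ n) (z : Fin n → ℂ) :
    ∑ k : Fin n, (charVec n (ζ ^ (k : ℕ)) ⬝ᵥ z) • charVec n (ζ⁻¹ ^ (k : ℕ)) = (n : ℂ) • z := by
  ext j
  simp only [Finset.sum_apply, Pi.smul_apply, smul_eq_mul, dotProduct, Finset.sum_mul]
  rw [Finset.sum_comm]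
  simp_rw [mul_right_comm _ (z _), ← Finset.sum_mul, sum_charVec_mul_charVec_inv hζ, ite_mul,
    zero_mul, sum_ite_eq', mem_univ, if_true]

end Fourier

theorem exists_norm_sum_exp_smul_le {E ι : Type*} [NormedAddCommGroup E] [NormedSpace ℂ E]
    (s : Finset ι) {μ : ι → ℂ} (hμ : ∀ k ∈ s, (μ k).re < 0) (b : ι → E) :
    ∃ C > 0, ∃ δ > 0, ∀ t : ℝ, 0 ≤ t →
      ‖∑ k ∈ s, exp (μ k * t) • b k‖ ≤ C * Real.exp (-δ * t) := by
  obtain ⟨δ, hδμ, hδ⟩ : ∃ δ, (∀ k ∈ s, δ ≤ -(μ k).re) ∧ 0 < δ :=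
    ((eventually_all_finset s).2 fun k hk =>
      nhdsWithin_le_nhds (eventually_le_nhds (by linarith [hμ k hk]))).and
      self_mem_nhdsWithin |>.exists (f := 𝓝[>] (0 : ℝ))
  refine ⟨∑ k ∈ s, ‖b k‖ + 1, by positivity, δ, hδ, fun t ht => ?_⟩
  calc ‖∑ k ∈ s, exp (μ k * t) • b k‖ ≤ ∑ k ∈ s, Real.exp (-δ * t) * ‖b k‖ := by
        refine (norm_sum_le _ _).trans (sum_le_sum fun k hk => ?_)
        rw [norm_smul, Complex.norm_exp, re_mul_ofReal]
        gcongr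
        nlinarith [hδμ k hk]
    _ ≤ (∑ k ∈ s, ‖b k‖ + 1) * Real.exp (-δ * t) := by
        rw [← mul_sum]; nlinarith [Real.exp_pos (-δ * t)]

theorem tendsto_of_norm_sub_le_mul_exp {E : Type*} [SeminormedAddCommGroup E] {f : ℝ → E}
    {L : E} {C δ : ℝ} (hδ : 0 < δ) (hf : ∀ t, 0 ≤ t → ‖f t - L‖ ≤ C * Real.exp (-δ * t)) :
    Tendsto f atTop (𝓝 L) := by
  rw [tendsto_iff_norm_sub_tendsto_zero]
  refine squeeze_zero' (.of_forall fun t => norm_nonneg _) ((eventually_ge_atTop 0).mono hf) ?_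
  simpa using
    (Real.tendsto_exp_neg_atTop_nhds_zero.comp (tendsto_id.const_mul_atTop hδ)).const_mul C

section YauFlow

variable {n m : ℕ} [NeZero n] {ζ : ℂ} {Z : ℝ → Fin n → ℂ}

theorem yauFlow_natCast_smul_eq_sum (hζ : IsPrimitiveRoot ζ n)
    (hZ : ∀ t j, HasDerivAt (fun s => Z s j) (((-1 : ℂ) ^ (m + 1) • (cycMC n ^ m) *ᵥ Z t) j) t)
    (t : ℝ) :
    (n : ℂ) • Z t = ∑ k : Fin n, exp (-(((‖ζ ^ (k : ℕ) - 1‖ ^ 2) ^ m : ℝ) : ℂ) * t) •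
      (charVec n (ζ ^ (k : ℕ)) ⬝ᵥ Z 0) • charVec n (ζ⁻¹ ^ (k : ℕ)) := by
  have hZ' : ∀ t j,
      HasDerivAt (fun s => Z s j) ((((-1 : ℂ) ^ (m + 1) • cycMC n ^ m) *ᵥ Z t) j) t :=
    fun t j => by rw [smul_mulVec]; exact hZ t j
  rw [← sum_dotProduct_charVec_smul hζ (Z t)]
  refine sum_congr rfl fun k _ => ?_
  have hk : (ζ ^ (k : ℕ)) ^ n = 1 := by rw [← pow_mul, mul_comm, pow_mul, hζ.pow_eq_one, one_pow]
  rw [dotProduct_eq_exp_mul_of_vecMul_eq_smul (charVec_vecMul_neg_one_pow_smul_cycMC_pow hk m) hZ' t, smul_smul]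

theorem yauFlow_sub_mean_eq_sum (hm : 1 ≤ m) (hζ : IsPrimitiveRoot ζ n)
    (hZ : ∀ t j, HasDerivAt (fun s => Z s j) (((-1 : ℂ) ^ (m + 1) • (cycMC n ^ m) *ᵥ Z t) j) t)
    (t : ℝ) :
    Z t - (fun _ => (n : ℂ)⁻¹ * ∑ j, Z 0 j) =
      ∑ k ∈ (univ : Finset (Fin n)).erase 0, exp (-(((‖ζ ^ (k : ℕ) - 1‖ ^ 2) ^ m : ℝ) : ℂ) * t) •
        (n : ℂ)⁻¹ • (charVec n (ζ ^ (k : ℕ)) ⬝ᵥ Z 0) • charVec n (ζ⁻¹ ^ (k : ℕ)) := by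
  have hmean : exp (-(((‖ζ ^ ((0 : Fin n) : ℕ) - 1‖ ^ 2) ^ m : ℝ) : ℂ) * t) •
      (charVec n (ζ ^ ((0 : Fin n) : ℕ)) ⬝ᵥ Z 0) • charVec n (ζ⁻¹ ^ ((0 : Fin n) : ℕ))
        = fun _ => ∑ j, Z 0 j := by
    ext; simp [charVec, dotProduct, zero_pow (by omega : m ≠ 0)]
  have h := yauFlow_natCast_smul_eq_sum hζ hZ t
  rw [← add_sum_erase _ _ (mem_univ 0), hmean] at h
  simp_rw [smul_comm _ ((n : ℂ)⁻¹)]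
  rw [← smul_sum, eq_sub_of_add_eq' h.symm]
  ext j
  simp only [Pi.sub_apply, Pi.smul_apply, smul_eq_mul]
  rw [mul_sub, inv_mul_cancel_left₀ (Nat.cast_ne_zero.2 (NeZero.ne n))]

end YauFlow

theorem yau_difference_flow_convergence_general (n m : ℕ) [NeZero n] (hm : 1 ≤ m)
    (Y X0 : Fin n → ℂ) (X : ℝ → (Fin n → ℂ))
    (hflow : ∀ (t : ℝ) (j : Fin n),
      HasDerivAt (fun s => X s j)
        ((((-1 : ℂ) ^ (m + 1)) • (cycMC n ^ m).mulVec (X t - Y)) j) t)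
    (hinit : X 0 = X0) :
    Tendsto X atTop
        (nhds (Y + fun _ => (n : ℂ)⁻¹ * ∑ j : Fin n, (X0 j - Y j))) ∧
    ∃ C > (0 : ℝ), ∃ δ > (0 : ℝ), ∀ t : ℝ, 0 ≤ t →
      ‖X t - (Y + fun _ => (n : ℂ)⁻¹ * ∑ j : Fin n, (X0 j - Y j))‖ ≤ C * Real.exp (-δ * t) := by
  subst hinit
  set ζ := exp (2 * π * I / n)
  have hζ : IsPrimitiveRoot ζ n := isPrimitiveRoot_exp n (NeZero.ne n)
  have hrate : ∀ k ∈ (univ : Finset (Fin n)).erase 0,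
      (-(((‖ζ ^ (k : ℕ) - 1‖ ^ 2) ^ m : ℝ) : ℂ)).re < 0 := fun k hk => by
    have hk : ζ ^ (k : ℕ) ≠ 1 :=
      hζ.pow_ne_one_of_pos_of_lt (Fin.val_ne_zero_iff.2 (ne_of_mem_erase hk)) k.isLt
    rw [← Complex.ofReal_neg, Complex.ofReal_re, neg_lt_zero]
    exact pow_pos (pow_pos (norm_pos_iff.2 (sub_ne_zero.2 hk)) 2) m
  obtain ⟨C, hC, δ, hδ, hbound⟩ := exists_norm_sum_exp_smul_le _ hrate fun k =>
    (n : ℂ)⁻¹ • (charVec n (ζ ^ (k : ℕ)) ⬝ᵥ (X 0 - Y)) • charVec n (ζ⁻¹ ^ (k : ℕ))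
  have hdecay : ∀ t : ℝ, 0 ≤ t →
      ‖X t - (Y + fun _ => (n : ℂ)⁻¹ * ∑ j : Fin n, (X 0 j - Y j))‖ ≤ C * Real.exp (-δ * t) := by
    intro t ht
    have hexpand := yauFlow_sub_mean_eq_sum hm hζ (Z := fun s => X s - Y)
      (fun t j => (hflow t j).sub_const (Y j)) t
    simp only [Pi.sub_apply] at hexpand
    rw [← sub_sub, hexpand]
    exact hbound t ht
  exact ⟨tendsto_of_norm_sub_le_mul_exp hδ hdecay, C, hC, δ, hδ, hdecay⟩

theorem yau_difference_flow_convergence (n m : ℕ) [NeZero n] (hn : 3 ≤ n) (hm : 1 ≤ m)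
    (Y X0 : Fin n → ℂ) (X : ℝ → (Fin n → ℂ))
    (hflow : ∀ (t : ℝ) (j : Fin n),
      HasDerivAt (fun s => X s j)
        ((((-1 : ℂ) ^ (m + 1)) • (cycMC n ^ m).mulVec (X t - Y)) j) t)
    (hinit : X 0 = X0) :
    Tendsto X atTop
        (nhds (Y + fun _ => (n : ℂ)⁻¹ * ∑ j : Fin n, (X0 j - Y j))) ∧
    ∃ C > (0 : ℝ), ∃ δ > (0 : ℝ), ∀ t : ℝ, 0 ≤ t →
      ‖X t - (Y + fun _ => (n : ℂ)⁻¹ * ∑ j : Fin n, (X0 j - Y j))‖ ≤ C * Real.exp (-δ * t) :=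
  yau_difference_flow_convergence_general n m hm Y X0 X hflow hinit
end
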